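/- Fix n ≥ 2, let g, f : ℂ → ℂ, and let L be an n×n real symmetric positive semidefinite matrix with L𝟙 = 0 for which there exists μ > 0 with x*Lx ≥ μ‖x‖² for every complex vector x orthogonal to 𝟙 (the network is connected: λ₂(L) > 0). Let s₀ ∈ ℂ and suppose: (i) |f(s)| → ∞ as s → s₀ through values s ≠ s₀ (s₀ is a pole of f); (ii) there exist δ, M > 0 such that 1/M ≤ |g(s)| ≤ M for all s with 0 < |s − s₀| ≤ δ. Then ‖(g(s)⁻¹·I + f(s)·L)⁻¹ − (1/n)g(s)·𝟙𝟙ᵀ‖ → 0 as s → s₀ through values s ≠ s₀. -/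

import Mathlib

open Matrix Complex Filter Topology

/-- Spectral norm (L2 operator norm) of a complex matrix. -/
noncomputable def specNorm {n : ℕ} (A : Matrix (Fin n) (Fin n) ℂ) : ℝ :=
  ‖Matrix.toEuclideanCLM (𝕜 := ℂ) A‖

/-- The all-ones matrix. -/
def allOnes (n : ℕ) : Matrix (Fin n) (Fin n) ℂ := Matrix.of fun _ _ => 1

/-!
Write `A = γ⁻¹ I + φ L` and `J = 𝟙𝟙ᵀ`. Since `L𝟙 = 0` and `𝟙ᵀL = 0`, `A` acts as `γ⁻¹` on the
constants and maps mean-zero vectors to mean-zero vectors; on those, the spectral gap and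
Cauchy–Schwarz applied to `⟪x, A x⟫ = γ⁻¹‖x‖² + φ⟪x, L x⟫` give `‖A x‖ ≥ (μ|φ| - |γ⁻¹|) ‖x‖`.
For any `x`, the vector `y = (A⁻¹ - γ J / n) x` is mean-zero and solves `A y = x - mean(x) 𝟙`,
so `‖y‖ ≤ ‖x‖ / (μ|φ| - |γ⁻¹|)`. This bound tends to `0` as `|f| → ∞` with `|g|` bounded below.
-/

open WithLp

section
variable {ι : Type*} [Fintype ι]

noncomputable def vecMean (x : ι → ℂ) : ℂ := (Fintype.card ι : ℂ)⁻¹ * ∑ i, x i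

theorem sum_sub_vecMean_smul_one (x : ι → ℂ) : ∑ i, (x - vecMean x • 1) i = 0 := by
  rcases isEmpty_or_nonempty ι with hι | hι
  · simp
  · have : (Fintype.card ι : ℂ) ≠ 0 := Nat.cast_ne_zero.2 Fintype.card_ne_zero
    simp [vecMean, Finset.sum_sub_distrib]

theorem norm_sub_vecMean_smul_one_le (x : ι → ℂ) :
    ‖toLp 2 (x - vecMean x • 1)‖ ≤ ‖toLp 2 x‖ := by
  have horth : inner ℂ (toLp 2 (x - vecMean x • 1)) (toLp 2 (vecMean x • (1 : ι → ℂ))) = 0 := by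
    rw [toLp_smul, inner_smul_right, EuclideanSpace.inner_toLp_toLp, one_dotProduct]
    simp only [Pi.star_apply, ← star_sum, sum_sub_vecMean_smul_one, star_zero, mul_zero]
  have := norm_add_sq_eq_norm_sq_add_norm_sq_of_inner_eq_zero _ _ horth
  rw [← toLp_add, sub_add_cancel] at this
  refine (mul_self_le_mul_self_iff (norm_nonneg _) (norm_nonneg _)).2 ?_
  rw [this]
  exact le_add_of_nonneg_right (mul_self_nonneg _)

theorem norm_star_dotProduct_le (x y : ι → ℂ) : ‖star x ⬝ᵥ y‖ ≤ ‖toLp 2 x‖ * ‖toLp 2 y‖ := by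
  simpa [EuclideanSpace.inner_toLp_toLp, dotProduct_comm] using
    norm_inner_le_norm (𝕜 := ℂ) (toLp 2 x) (toLp 2 y)

def HasSpectralGap (K : Matrix ι ι ℂ) (μ : ℝ) : Prop :=
  ∀ x : ι → ℂ, ∑ i, x i = 0 → μ * ∑ i, ‖x i‖ ^ 2 ≤ (star x ⬝ᵥ K *ᵥ x).re

theorem sum_mulVec_of_one_vecMul {A : Matrix ι ι ℂ} {a : ℂ} (h1A : 1 ᵥ* A = a • 1) (y : ι → ℂ) :
    ∑ i, (A *ᵥ y) i = a * ∑ i, y i := by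
  rw [← one_dotProduct, dotProduct_mulVec, h1A, smul_dotProduct, one_dotProduct, smul_eq_mul]

theorem map_ofReal_mulVec_one {L : Matrix ι ι ℝ} (hL1 : L *ᵥ 1 = 0) :
    L.map ofReal *ᵥ 1 = 0 := by
  ext i
  simpa [mulVec, dotProduct] using congrArg ofReal (congrFun hL1 i)

theorem one_vecMul_map_ofReal {L : Matrix ι ι ℝ} (hL : L.IsSymm) (hL1 : L *ᵥ 1 = 0) :
    1 ᵥ* L.map ofReal = 0 := by
  rw [← mulVec_transpose, ← transpose_map, hL.eq, map_ofReal_mulVec_one hL1]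

variable [DecidableEq ι]

theorem HasSpectralGap.mul_norm_le_norm_smul_one_add_smul_mulVec {K : Matrix ι ι ℂ} {μ : ℝ}
    (hK : HasSpectralGap K μ) (a φ : ℂ) {x : ι → ℂ} (hx : ∑ i, x i = 0) :
    (μ * ‖φ‖ - ‖a‖) * ‖toLp 2 x‖ ≤ ‖toLp 2 ((a • 1 + φ • K) *ᵥ x)‖ := by
  set r := ‖toLp 2 x‖
  set q := star x ⬝ᵥ K *ᵥ x
  have hr : ∑ i, ‖x i‖ ^ 2 = r ^ 2 := by simp [r, EuclideanSpace.norm_sq_eq]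
  have hq : μ * r ^ 2 ≤ ‖q‖ := by
    rw [← hr]; exact (hK x hx).trans ((le_abs_self _).trans (abs_re_le_norm q))
  have hxx : star x ⬝ᵥ x = (r : ℂ) ^ 2 := by
    rw [dotProduct_comm, ← EuclideanSpace.inner_toLp_toLp]
    exact inner_self_eq_norm_sq_to_K _
  have hdot : star x ⬝ᵥ (a • 1 + φ • K) *ᵥ x = a * (r : ℂ) ^ 2 + φ * q := by
    rw [add_mulVec, smul_mulVec, smul_mulVec, one_mulVec, dotProduct_add, dotProduct_smul,
      dotProduct_smul, hxx, smul_eq_mul, smul_eq_mul]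
  have hquad : (μ * ‖φ‖ - ‖a‖) * r ^ 2 ≤ r * ‖toLp 2 ((a • 1 + φ • K) *ᵥ x)‖ :=
    calc (μ * ‖φ‖ - ‖a‖) * r ^ 2 ≤ ‖φ * q‖ - ‖a * (r : ℂ) ^ 2‖ := by
          rw [norm_mul, norm_mul, norm_pow, norm_real, Real.norm_of_nonneg (norm_nonneg _)]
          nlinarith [norm_nonneg φ]
      _ ≤ ‖a * (r : ℂ) ^ 2 + φ * q‖ := by
          rw [add_comm]; exact norm_sub_le_norm_add _ _
      _ ≤ r * ‖toLp 2 ((a • 1 + φ • K) *ᵥ x)‖ := hdot ▸ norm_star_dotProduct_le _ _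
  rcases (norm_nonneg (toLp 2 x)).eq_or_lt with h0 | hpos
  · simp [r, ← h0]
  · nlinarith

theorem isUnit_of_one_vecMul_of_coercive {A : Matrix ι ι ℂ} {a : ℂ} {c : ℝ} (ha : a ≠ 0)
    (hc : 0 < c) (h1A : 1 ᵥ* A = a • 1)
    (hA : ∀ x : ι → ℂ, ∑ i, x i = 0 → c * ‖toLp 2 x‖ ≤ ‖toLp 2 (A *ᵥ x)‖) : IsUnit A := by
  rw [isUnit_iff_isUnit_det, isUnit_iff_ne_zero, ne_eq, ← exists_mulVec_eq_zero_iff]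
  rintro ⟨v, hv0, hv⟩
  have hsum : ∑ i, v i = 0 := by
    simpa [hv, ha] using sum_mulVec_of_one_vecMul h1A v
  have := hA v hsum
  rw [hv, toLp_zero, norm_zero] at this
  exact hv0 (by simpa using nonpos_of_mul_nonpos_right this hc)

end

theorem allOnes_mulVec {n : ℕ} (x : Fin n → ℂ) : allOnes n *ᵥ x = (∑ i, x i) • 1 := by
  ext; simp [allOnes, mulVec, dotProduct]

theorem specNorm_inv_sub_smul_allOnes_le {n : ℕ} {A : Matrix (Fin n) (Fin n) ℂ} {a : ℂ} {c : ℝ}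
    (ha : a ≠ 0) (hc : 0 < c) (hA1 : A *ᵥ 1 = a • 1) (h1A : 1 ᵥ* A = a • 1)
    (hA : ∀ x : Fin n → ℂ, ∑ i, x i = 0 → c * ‖toLp 2 x‖ ≤ ‖toLp 2 (A *ᵥ x)‖) :
    specNorm (A⁻¹ - ((n : ℂ)⁻¹ * a⁻¹) • allOnes n) ≤ c⁻¹ := by
  have hAinv : A * A⁻¹ = 1 :=
    mul_nonsing_inv A ((isUnit_iff_isUnit_det A).1 (isUnit_of_one_vecMul_of_coercive ha hc h1A hA))
  refine ContinuousLinearMap.opNorm_le_bound _ (inv_nonneg.2 hc.le) fun v => ?_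
  obtain ⟨x, rfl⟩ : ∃ x, toLp 2 x = v := ⟨ofLp v, toLp_ofLp _ _⟩
  rw [toEuclideanCLM_toLp]
  set y := (A⁻¹ - ((n : ℂ)⁻¹ * a⁻¹) • allOnes n) *ᵥ x with hy_def
  have hy : A *ᵥ y = x - vecMean x • 1 := by
    rw [hy_def, sub_mulVec, mulVec_sub, mulVec_mulVec, hAinv, one_mulVec, smul_mulVec, mulVec_smul,
      allOnes_mulVec, mulVec_smul, hA1, smul_smul, smul_smul, vecMean, Fintype.card_fin]
    congr 2
    field_simp
  have hy0 : ∑ i, y i = 0 := by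
    have := sum_mulVec_of_one_vecMul h1A y
    rw [hy, sum_sub_vecMean_smul_one] at this
    exact (mul_eq_zero.1 this.symm).resolve_left ha
  calc ‖toLp 2 y‖ ≤ c⁻¹ * ‖toLp 2 (A *ᵥ y)‖ := (le_inv_mul_iff₀ hc).2 (hA y hy0)
    _ ≤ c⁻¹ * ‖toLp 2 x‖ := by
      rw [hy]; gcongr; exact norm_sub_vecMean_smul_one_le x

theorem specNorm_inv_smul_one_add_smul_sub_le {n : ℕ} {K : Matrix (Fin n) (Fin n) ℂ} {μ : ℝ}
    (hK1 : K *ᵥ 1 = 0) (h1K : 1 ᵥ* K = 0) (hK : HasSpectralGap K μ) {γ φ : ℂ} {M : ℝ}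
    (hγ : γ ≠ 0) (hγM : ‖γ⁻¹‖ ≤ M) (hMφ : M < μ * ‖φ‖) :
    specNorm ((γ⁻¹ • 1 + φ • K)⁻¹ - ((n : ℂ)⁻¹ * γ) • allOnes n) ≤ (μ * ‖φ‖ - M)⁻¹ := by
  have := specNorm_inv_sub_smul_allOnes_le (A := γ⁻¹ • 1 + φ • K) (inv_ne_zero hγ)
    (sub_pos.2 hMφ)
    (by rw [add_mulVec, smul_mulVec, smul_mulVec, one_mulVec, hK1, smul_zero, add_zero])
    (by rw [vecMul_add, vecMul_smul, vecMul_smul, vecMul_one, h1K, smul_zero, add_zero])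
    fun x hx => (hK.mul_norm_le_norm_smul_one_add_smul_mulVec γ⁻¹ φ hx).trans' (by gcongr)
  rwa [inv_inv] at this

theorem stmt_9_general {n : ℕ} (g f : ℂ → ℂ)
    (L : Matrix (Fin n) (Fin n) ℝ) (hL : L.PosSemidef)
    (hL1 : L.mulVec (fun _ => 1) = 0)
    (μ : ℝ) (hμ : 0 < μ)
    (hgap : ∀ x : Fin n → ℂ, (∑ i, x i = 0) →
      μ * ∑ i, ‖x i‖ ^ 2 ≤ (star x ⬝ᵥ (L.map (Complex.ofReal)).mulVec x).re)
    (s₀ : ℂ)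
    (hf : Tendsto (fun s => ‖f s‖) (𝓝[≠] s₀) atTop)
    (hbd : ∃ δ > 0, ∃ M > 0, ∀ s : ℂ, 0 < ‖s - s₀‖ → ‖s - s₀‖ ≤ δ →
      1 / M ≤ ‖g s‖ ∧ ‖g s‖ ≤ M) :
    Tendsto (fun s =>
        specNorm (((g s)⁻¹ • (1 : Matrix (Fin n) (Fin n) ℂ) + f s • L.map (Complex.ofReal))⁻¹
          - ((n : ℂ)⁻¹ * g s) • allOnes n))
      (𝓝[≠] s₀) (𝓝 0) := by
  obtain ⟨δ, hδ, M, hM, hgM⟩ := hbd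
  have hsymm : L.IsSymm := isHermitian_iff_isSymm.1 hL.isHermitian
  have hbound : ∀ᶠ s in 𝓝[≠] s₀, specNorm (((g s)⁻¹ • (1 : Matrix (Fin n) (Fin n) ℂ)
      + f s • L.map (Complex.ofReal))⁻¹ - ((n : ℂ)⁻¹ * g s) • allOnes n) ≤ (μ * ‖f s‖ - M)⁻¹ := by
    filter_upwards [self_mem_nhdsWithin, nhdsWithin_le_nhds (Metric.closedBall_mem_nhds s₀ hδ),
      hf.eventually_gt_atTop (M / μ)] with s hs hsδ hfs
    obtain ⟨hgs, -⟩ := hgM s (norm_pos_iff.2 (sub_ne_zero.2 hs)) (by simpa [dist_eq_norm] using hsδ)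
    have hgs0 : 0 < ‖g s‖ := (one_div_pos.2 hM).trans_le hgs
    exact specNorm_inv_smul_one_add_smul_sub_le (map_ofReal_mulVec_one hL1)
      (one_vecMul_map_ofReal hsymm hL1) hgap (norm_pos_iff.1 hgs0)
      (by rw [norm_inv]; exact inv_le_of_inv_le₀ hM (by rwa [← one_div]))
      (by rwa [div_lt_iff₀' hμ] at hfs)
  have htend : Tendsto (fun s => (μ * ‖f s‖ - M)⁻¹) (𝓝[≠] s₀) (𝓝 0) :=
    (tendsto_atTop_add_const_right _ _ (hf.const_mul_atTop hμ)).inv_tendsto_atTop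
  exact squeeze_zero' (.of_forall fun _ => norm_nonneg _) hbound htend

/-- motivating example (Section 2.1), second claim: homogeneous
network coherence under high gain in the coupling dynamics. -/
theorem stmt_9 {n : ℕ} (hn : 2 ≤ n) (g f : ℂ → ℂ)
    (L : Matrix (Fin n) (Fin n) ℝ) (hL : L.PosSemidef)
    (hL1 : L.mulVec (fun _ => 1) = 0)
    (μ : ℝ) (hμ : 0 < μ)
    (hgap : ∀ x : Fin n → ℂ, (∑ i, x i = 0) →
      μ * ∑ i, ‖x i‖ ^ 2 ≤ (star x ⬝ᵥ (L.map (Complex.ofReal)).mulVec x).re)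
    (s₀ : ℂ)
    (hf : Tendsto (fun s => ‖f s‖) (𝓝[≠] s₀) atTop)
    (hbd : ∃ δ > 0, ∃ M > 0, ∀ s : ℂ, 0 < ‖s - s₀‖ → ‖s - s₀‖ ≤ δ →
      1 / M ≤ ‖g s‖ ∧ ‖g s‖ ≤ M) :
    Tendsto (fun s =>
        specNorm (((g s)⁻¹ • (1 : Matrix (Fin n) (Fin n) ℂ) + f s • L.map (Complex.ofReal))⁻¹
          - ((n : ℂ)⁻¹ * g s) • allOnes n))
      (𝓝[≠] s₀) (𝓝 0) :=
  stmt_9_general g f L hL hL1 μ hμ hgap s₀ hf hbd
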